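/- Let F be an integrable real random variable on a probability space (Ω, P), let γ denote the standard Gaussian measure N(0,1) on ℝ, let φ : ℝ → ℝ be of class C¹ with bounded derivative, and let t ∈ [0,1]. Then | ∫_Ω ∫_ℝ φ(√t·y + √(1−t)·F(ω)) dγ(y) dP(ω) − E[φ(F)] | ≤ √t · sup_x|φ'(x)| · ( √(2/π) + E[|F|] ). -/

import Mathlib

open MeasureTheory ProbabilityTheory Real Set Filter Topology
open scoped NNReal

/-!
Since `|φ'| ≤ M`, `φ` is `M`-Lipschitz, so for every value `c` of `F`
`|φ (√t y + √(1-t) c) - φ c| ≤ M (√t |y| + (1 - √(1-t)) |c|) ≤ M √t (|y| + |c|)`,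
because `1 ≤ √t + √(1-t)`. Integrating in `y` against `γ`, whose first absolute moment is
`√(2/π)`, and then in `ω` gives the bound. The smoothed function
`c ↦ ∫ φ (√t y + √(1-t) c) dγ(y)` is again Lipschitz, which makes it integrable along `F`.
-/

lemma integral_Ioi_mul_exp_neg_sq_div_two : ∫ x in Ioi (0 : ℝ), x * exp (-x ^ 2 / 2) = 1 := by
  have hderiv : ∀ x ∈ Ici (0 : ℝ),
      HasDerivAt (fun x => -exp (-x ^ 2 / 2)) (x * exp (-x ^ 2 / 2)) x := fun x _ => by
    have h : HasDerivAt (fun x : ℝ => -x ^ 2 / 2) (-x) x := by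
      simpa using ((hasDerivAt_pow 2 x).neg.div_const 2).congr_deriv (by ring)
    exact h.exp.neg.congr_deriv (by ring)
  have hint : IntegrableOn (fun x : ℝ => x * exp (-x ^ 2 / 2)) (Ioi 0) :=
    ((integrable_mul_exp_neg_mul_sq (b := 1 / 2) (by norm_num)).congr
      (ae_of_all _ fun x => by ring_nf)).integrableOn
  have htend : Tendsto (fun x : ℝ => -exp (-x ^ 2 / 2)) atTop (𝓝 0) := by
    simpa [neg_div] using (tendsto_exp_atBot.comp (tendsto_neg_atTop_atBot.comp
      ((tendsto_pow_atTop two_ne_zero).atTop_div_const (two_pos : (0 : ℝ) < 2)))).neg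
  simpa using integral_Ioi_of_hasDerivAt_of_tendsto' hderiv hint htend

lemma integral_abs_mul_exp_neg_sq_div_two : ∫ x, |x| * exp (-x ^ 2 / 2) = 2 := by
  have := integral_comp_abs (f := fun x => x * exp (-x ^ 2 / 2))
  simp only [sq_abs, integral_Ioi_mul_exp_neg_sq_div_two] at this
  simpa using this

lemma integral_abs_gaussianReal : ∫ x, |x| ∂gaussianReal 0 1 = √(2 / π) := by
  rw [integral_gaussianReal_eq_integral_smul one_ne_zero]
  have h : ∀ x : ℝ, gaussianPDFReal 0 1 x • |x| = (√(2 * π))⁻¹ * (|x| * exp (-x ^ 2 / 2)) := by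
    simp [gaussianPDFReal, mul_comm, mul_assoc]
  simp_rw [h]
  rw [integral_const_mul, integral_abs_mul_exp_neg_sq_div_two, sqrt_div zero_le_two,
    sqrt_mul zero_le_two]
  field_simp
  norm_num

section Lipschitz

variable {α : Type*} [MeasurableSpace α] {μ : Measure α}

lemma LipschitzWith.integrable_comp {E F : Type*} [NormedAddCommGroup E] [NormedAddCommGroup F]
    [IsFiniteMeasure μ] {K : ℝ≥0} {φ : E → F} (hφ : LipschitzWith K φ) {f : α → E}
    (hf : Integrable f μ) : Integrable (fun x => φ (f x)) μ := by
  refine Integrable.mono' ((integrable_const ‖φ 0‖).add (hf.norm.const_mul K))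
    (hφ.continuous.comp_aestronglyMeasurable hf.1) (ae_of_all _ fun x => ?_)
  show ‖φ (f x)‖ ≤ ‖φ 0‖ + K * ‖f x‖
  have := hφ.norm_sub_le (f x) 0
  rw [sub_zero] at this
  linarith [norm_le_insert' (φ (f x)) (φ 0)]

lemma lipschitzWith_integral {X E : Type*} [PseudoMetricSpace X] [NormedAddCommGroup E]
    [NormedSpace ℝ E] [IsProbabilityMeasure μ] {K : ℝ≥0} {f : X → α → E}
    (hf : ∀ a, LipschitzWith K (f · a)) (hint : ∀ x, Integrable (f x) μ) :
    LipschitzWith K (fun x => ∫ a, f x a ∂μ) := by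
  refine LipschitzWith.of_dist_le_mul fun x x' => ?_
  rw [dist_eq_norm, ← integral_sub (hint x) (hint x')]
  simpa using norm_integral_le_of_norm_le_const (μ := μ)
    (ae_of_all _ fun a => (dist_eq_norm (f x a) (f x' a)).symm.trans_le ((hf a).dist_le_mul x x'))

end Lipschitz

lemma abs_integral_comp_affine_sub_le {ν : Measure ℝ} [IsProbabilityMeasure ν]
    (hν : Integrable id ν) {K : ℝ≥0} {φ : ℝ → ℝ} (hφ : LipschitzWith K φ) (a b c : ℝ) :
    |∫ y, φ (a * y + b * c) ∂ν - φ c| ≤ K * (|a| * ∫ y, |y| ∂ν + |b - 1| * |c|) := by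
  have habs : Integrable (fun y => |y|) ν := hν.abs
  have hint : Integrable (fun y => φ (a * y + b * c)) ν :=
    hφ.integrable_comp ((hν.const_mul a).add (integrable_const _))
  have hpoint : ∀ y, |φ (a * y + b * c) - φ c| ≤ K * (|a| * |y| + |b - 1| * |c|) := fun y => by
    calc |φ (a * y + b * c) - φ c| ≤ K * |a * y + (b - 1) * c| := by
          simpa [Real.dist_eq, sub_mul, add_sub_assoc] using hφ.dist_le_mul (a * y + b * c) c
      _ ≤ K * (|a| * |y| + |b - 1| * |c|) := by
          grw [abs_add_le, abs_mul, abs_mul]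
  calc |∫ y, φ (a * y + b * c) ∂ν - φ c| = |∫ y, (φ (a * y + b * c) - φ c) ∂ν| := by
        rw [integral_sub hint (integrable_const _), integral_const, probReal_univ, one_smul]
    _ ≤ ∫ y, K * (|a| * |y| + |b - 1| * |c|) ∂ν :=
        abs_integral_le_integral_abs.trans
          (integral_mono (hint.sub (integrable_const _)).abs
            (((habs.const_mul _).add (integrable_const _)).const_mul _) hpoint)
    _ = K * (|a| * ∫ y, |y| ∂ν + |b - 1| * |c|) := by
        rw [integral_const_mul, integral_add (habs.const_mul _) (integrable_const _),
          integral_const_mul, integral_const, probReal_univ, one_smul]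

lemma abs_integral_integral_comp_affine_sub_le {Ω : Type*} [MeasurableSpace Ω] {P : Measure Ω}
    [IsProbabilityMeasure P] {F : Ω → ℝ} (hF : Integrable F P) {ν : Measure ℝ}
    [IsProbabilityMeasure ν] (hν : Integrable id ν) {K : ℝ≥0} {φ : ℝ → ℝ}
    (hφ : LipschitzWith K φ) (a b : ℝ) :
    |∫ ω, ∫ y, φ (a * y + b * F ω) ∂ν ∂P - ∫ ω, φ (F ω) ∂P|
      ≤ K * (|a| * ∫ y, |y| ∂ν + |b - 1| * ∫ ω, |F ω| ∂P) := by
  have hsmooth : LipschitzWith (K * ‖b‖₊) (fun c => ∫ y, φ (a * y + b * c) ∂ν) :=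
    lipschitzWith_integral
      (fun y => hφ.comp (LipschitzWith.of_dist_le_mul fun c c' => by
        simp [Real.dist_eq, ← mul_sub, abs_mul]))
      (fun c => hφ.integrable_comp ((hν.const_mul a).add (integrable_const _)))
  have hbound : Integrable (fun ω => K * (|a| * ∫ y, |y| ∂ν + |b - 1| * |F ω|)) P :=
    ((integrable_const _).add (hF.abs.const_mul _)).const_mul _
  calc |∫ ω, ∫ y, φ (a * y + b * F ω) ∂ν ∂P - ∫ ω, φ (F ω) ∂P|
      = |∫ ω, (∫ y, φ (a * y + b * F ω) ∂ν - φ (F ω)) ∂P| := by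
        rw [integral_sub (hsmooth.integrable_comp hF) (hφ.integrable_comp hF)]
    _ ≤ ∫ ω, K * (|a| * ∫ y, |y| ∂ν + |b - 1| * |F ω|) ∂P :=
        abs_integral_le_integral_abs.trans
          (integral_mono ((hsmooth.integrable_comp hF).sub (hφ.integrable_comp hF)).abs hbound
            fun ω => abs_integral_comp_affine_sub_le hν hφ a b (F ω))
    _ = K * (|a| * ∫ y, |y| ∂ν + |b - 1| * ∫ ω, |F ω| ∂P) := by
        rw [integral_const_mul, integral_add (integrable_const _) (hF.abs.const_mul _),
          integral_const, probReal_univ, one_smul, integral_const_mul]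

theorem gaussian_smoothing_error
    {Ω : Type*} [MeasureSpace Ω] [IsProbabilityMeasure (ℙ : Measure Ω)]
    (F : Ω → ℝ) (hF : Integrable F ℙ)
    (φ : ℝ → ℝ) (hφ : ContDiff ℝ 1 φ) (hφ' : ∃ C : ℝ, ∀ x, |deriv φ x| ≤ C)
    (t : ℝ) (ht : t ∈ Set.Icc (0 : ℝ) 1) :
    |(∫ ω, ∫ y, φ (Real.sqrt t * y + Real.sqrt (1 - t) * F ω) ∂(gaussianReal 0 1) ∂ℙ)
        - ∫ ω, φ (F ω) ∂ℙ|
      ≤ Real.sqrt t * (⨆ x, |deriv φ x|) * (Real.sqrt (2 / Real.pi) + ∫ ω, |F ω| ∂ℙ) := by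
  obtain ⟨C, hC⟩ := hφ'
  set M := ⨆ x, |deriv φ x|
  have hM : ∀ x, |deriv φ x| ≤ M := le_ciSup ⟨C, by rintro _ ⟨x, rfl⟩; exact hC x⟩
  have hM0 : 0 ≤ M := (abs_nonneg _).trans (hM 0)
  have hφM : LipschitzWith (⟨M, hM0⟩ : ℝ≥0) φ :=
    lipschitzWith_of_nnnorm_deriv_le (hφ.differentiable one_ne_zero) fun x => by
      change ‖deriv φ x‖ ≤ M
      exact hM x
  have hγ : Integrable id (gaussianReal 0 1) :=
    memLp_one_iff_integrable.mp (memLp_id_gaussianReal 1)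
  have hcoef : |√(1 - t) - 1| ≤ √t := by
    have h1 : √(1 - t) ≤ 1 := sqrt_le_one.mpr (by linarith [ht.1])
    have h2 : 1 ≤ √t + √(1 - t) := by
      nlinarith [sq_sqrt ht.1, sq_sqrt (sub_nonneg.mpr ht.2), sqrt_nonneg t, sqrt_nonneg (1 - t)]
    rw [abs_sub_comm, abs_of_nonneg (sub_nonneg.mpr h1)]
    linarith
  refine (abs_integral_integral_comp_affine_sub_le hF hγ hφM _ _).trans ?_
  rw [integral_abs_gaussianReal, abs_of_nonneg (sqrt_nonneg t)]
  have hE := integral_nonneg (μ := ℙ) (f := fun ω => |F ω|) fun ω => abs_nonneg (F ω)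
  calc M * (√t * √(2 / π) + |√(1 - t) - 1| * ∫ ω, |F ω|)
      ≤ M * (√t * √(2 / π) + √t * ∫ ω, |F ω|) := by gcongr
    _ = √t * M * (√(2 / π) + ∫ ω, |F ω|) := by ring
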